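/- Let Φ, Φ₁ be admissible functions, X a uniformly perfect metric space with more than one point, and F a non-empty totally bounded subset with 0 < dim_A F < ∞ and dim^Φ_upper F = 0. Let η ∈ (0, dim_A F). If there exist b, Δ > 0 such that Φ₁(δ^α) ≤ (Φ(δ))^b for all δ ∈ (0,Δ), where α = dim_A F/(dim_A F − η), then dim^{Φ₁}_upper F ≤ η. -/

import Mathlib

open Metric Set Filter MeasureTheory Topology

/-- A metric space is `c`-uniformly perfect for some `c ∈ (0,1)`:
for all `x` and `0 < R < diam X`, `B(x,R) \ B(x,cR) ≠ ∅`. -/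
def UniformlyPerfect (X : Type*) [MetricSpace X] : Prop :=
  ∃ c : ℝ, 0 < c ∧ c < 1 ∧ ∀ (x : X) (R : ℝ), 0 < R →
    ENNReal.ofReal R < EMetric.diam (Set.univ : Set X) →
    ∃ y : X, dist x y < R ∧ c * R ≤ dist x y

/-- `Φ` is admissible: on some interval `(0,Y)` it satisfies `0 < Φ(δ) ≤ δ`,
`Φ(δ)/δ → 0` as `δ → 0⁺`, and `Φ` is monotonic on `(0,Y)`. -/
def Admissible (Φ : ℝ → ℝ) : Prop :=
  ∃ Y : ℝ, 0 < Y ∧ (∀ δ ∈ Set.Ioo (0:ℝ) Y, 0 < Φ δ ∧ Φ δ ≤ δ) ∧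
    Filter.Tendsto (fun δ => Φ δ / δ) (nhdsWithin 0 (Set.Ioi 0)) (nhds 0) ∧
    (MonotoneOn Φ (Set.Ioo 0 Y) ∨ AntitoneOn Φ (Set.Ioo 0 Y))

/-- There is a (finite) cover of `F` by sets of diameter in `[Φ(δ), δ]`
whose `s`-diameter sum is at most `ε`. -/
def CoverSum {X : Type*} [MetricSpace X] (Φ : ℝ → ℝ) (s ε δ : ℝ) (F : Set X) : Prop :=
  ∃ (n : ℕ) (U : Fin n → Set X), F ⊆ ⋃ i, U i ∧
    (∀ i, Φ δ ≤ Metric.diam (U i) ∧ Metric.diam (U i) ≤ δ) ∧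
    ∑ i, Metric.diam (U i) ^ s ≤ ε

/-- The upper `Φ`-intermediate dimension. -/
noncomputable def upperPhiDim {X : Type*} [MetricSpace X] (Φ : ℝ → ℝ) (F : Set X) : ℝ :=
  sInf {s : ℝ | 0 ≤ s ∧ ∀ ε : ℝ, 0 < ε → ∃ δ₀ ∈ Set.Ioc (0:ℝ) 1,
    ∀ δ ∈ Set.Ioo (0:ℝ) δ₀, CoverSum Φ s ε δ F}

/-- The lower `Φ`-intermediate dimension. -/
noncomputable def lowerPhiDim {X : Type*} [MetricSpace X] (Φ : ℝ → ℝ) (F : Set X) : ℝ :=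
  sInf {s : ℝ | 0 ≤ s ∧ ∀ ε : ℝ, 0 < ε → ∀ δ₀ ∈ Set.Ioc (0:ℝ) 1,
    ∃ δ ∈ Set.Ioo (0:ℝ) δ₀, CoverSum Φ s ε δ F}

/-- The smallest number of sets of diameter at most `δ` needed to cover `F`. -/
noncomputable def coverNum {X : Type*} [MetricSpace X] (F : Set X) (δ : ℝ) : ℕ :=
  sInf {n : ℕ | ∃ U : Fin n → Set X, F ⊆ ⋃ i, U i ∧ ∀ i, Metric.diam (U i) ≤ δ}

/-- Upper box (Minkowski) dimension. -/
noncomputable def upperBoxDim {X : Type*} [MetricSpace X] (F : Set X) : ℝ :=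
  Filter.limsup (fun δ : ℝ => Real.log (coverNum F δ) / -Real.log δ)
    (nhdsWithin 0 (Set.Ioi 0))

/-- Lower box (Minkowski) dimension. -/
noncomputable def lowerBoxDim {X : Type*} [MetricSpace X] (F : Set X) : ℝ :=
  Filter.liminf (fun δ : ℝ => Real.log (coverNum F δ) / -Real.log δ)
    (nhdsWithin 0 (Set.Ioi 0))

/-- `α` witnesses the Assouad dimension bound for `F`. -/
def IsAssouadBound {X : Type*} [MetricSpace X] (F : Set X) (α : ℝ) : Prop :=
  0 ≤ α ∧ ∃ C : ℝ, 0 < C ∧ ∀ x ∈ F, ∀ r R : ℝ, 0 < r → r < R →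
    (coverNum (Metric.ball x R ∩ F) r : ℝ) ≤ C * (R / r) ^ α

/-- The Assouad dimension (junk value `0` if no bound exists). -/
noncomputable def assouadDim {X : Type*} [MetricSpace X] (F : Set X) : ℝ :=
  sInf {α : ℝ | IsAssouadBound F α}

/-- The upper `θ`-intermediate dimension: Hausdorff dimension at `θ = 0`,
upper box dimension at `θ = 1`, and `upperPhiDim` with `Φ(δ) = δ^(1/θ)` in between. -/
noncomputable def upperThetaDim {X : Type*} [MetricSpace X] (θ : ℝ) (F : Set X) : ℝ :=
  if θ = 0 then (dimH F).toReal
  else if θ = 1 then upperBoxDim F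
  else upperPhiDim (fun δ => δ ^ (1/θ)) F

/-- The lower `θ`-intermediate dimension. -/
noncomputable def lowerThetaDim {X : Type*} [MetricSpace X] (θ : ℝ) (F : Set X) : ℝ :=
  if θ = 0 then (dimH F).toReal
  else if θ = 1 then lowerBoxDim F
  else lowerPhiDim (fun δ => δ ^ (1/θ)) F

/-!
Let `A = dim_A F`, `α = A / (A - η)` and `q > η`. Pick an Assouad exponent `h > A` with
`h η < A q` and a `Φ`-exponent `s` so small that `s (A - η) ≤ A q - h η`, `s ≤ η` and `s ≤ b q`
(possible since `dim^Φ F = 0`). Given a scale `u`, cover `F` at the scale `v = u ^ (1 / α)` by sets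
`U` with `Φ v ≤ diam U ≤ v` and small total `∑ (diam U) ^ s`. A piece with `diam U ≤ u / 2` is
enlarged, by uniform perfectness, to diameter at least `Φ₁ u`; a larger piece lies in a ball of
radius `2 diam U` about a point of `F`, which the Assouad bound covers by `≲ (diam U / u) ^ h`
sets of size `u / 4`, each enlarged likewise. The choice of `α` gives
`(diam U) ^ h u ^ (q - h) ≤ (diam U) ^ s`, and `Φ₁ u ≤ (Φ v) ^ b` gives `(Φ₁ u) ^ q ≤ (Φ v) ^ s`,
so every piece costs `O((diam U) ^ s)` in the `q`-sum at scale `u`.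
-/

theorem rpow_add_le_two_rpow_mul {a b q : ℝ} (ha : 0 ≤ a) (hb : 0 ≤ b) (hq : 0 ≤ q) :
    (a + b) ^ q ≤ 2 ^ q * (a ^ q + b ^ q) := by
  calc (a + b) ^ q ≤ (2 * max a b) ^ q := by gcongr; linarith [le_max_left a b, le_max_right a b]
    _ = 2 ^ q * max a b ^ q := Real.mul_rpow zero_le_two (le_max_of_le_left ha)
    _ ≤ 2 ^ q * (a ^ q + b ^ q) := by
        gcongr
        rcases le_total a b with hab | hab
        · rw [max_eq_right hab]; linarith [Real.rpow_nonneg ha q]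
        · rw [max_eq_left hab]; linarith [Real.rpow_nonneg hb q]

theorem rpow_mul_rpow_rpow_le {d v α q h s : ℝ} (hd : 0 < d) (hdv : d ≤ v) (hv : v ≤ 1)
    (hsh : s ≤ h) (hexp : 0 ≤ α * (q - h) + h - s) : d ^ h * (v ^ α) ^ (q - h) ≤ d ^ s := by
  have hv₀ : 0 < v := hd.trans_le hdv
  calc d ^ h * (v ^ α) ^ (q - h) = d ^ s * (d ^ (h - s) * v ^ (α * (q - h))) := by
        rw [← Real.rpow_mul hv₀.le, ← mul_assoc, ← Real.rpow_add hd]; ring_nf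
    _ ≤ d ^ s * (v ^ (h - s) * v ^ (α * (q - h))) := by gcongr
    _ = d ^ s * v ^ (α * (q - h) + h - s) := by rw [← Real.rpow_add hv₀]; ring_nf
    _ ≤ d ^ s * 1 := by gcongr; exact Real.rpow_le_one hv₀.le hv hexp
    _ = d ^ s := mul_one _

theorem exists_exponent_gap {A η q b : ℝ} (hη : 0 < η) (hηA : η < A) (hq : η < q) (hb : 0 < b) :
    ∃ h, A < h ∧ ∃ t > 0, ∀ s ≤ t, s ≤ η ∧ s ≤ b * q ∧ 0 ≤ A / (A - η) * (q - h) + h - s := by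
  have hAη : 0 < A - η := sub_pos.2 hηA
  obtain ⟨h, hAh, hhq⟩ := exists_between ((lt_div_iff₀ hη).2 (by nlinarith : A * η < A * q))
  rw [lt_div_iff₀ hη] at hhq
  refine ⟨h, hAh, min η (min (b * q) ((A * q - h * η) / (A - η))),
    lt_min hη (lt_min (by nlinarith) (div_pos (by linarith) hAη)), fun s hs => ?_⟩
  have hgap : s * (A - η) ≤ A * q - h * η :=
    (le_div_iff₀ hAη).1 (hs.trans ((min_le_right _ _).trans (min_le_right _ _)))
  refine ⟨hs.trans (min_le_left _ _), hs.trans ((min_le_right _ _).trans (min_le_left _ _)), ?_⟩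
  have hexp : A / (A - η) * (q - h) + h - s = (A * q - h * η - s * (A - η)) / (A - η) := by
    field_simp
    ring
  rw [hexp]
  exact div_nonneg (by linarith) hAη.le

theorem eventually_nhdsGT_zero_iff {P : ℝ → Prop} :
    (∀ᶠ δ in 𝓝[>] 0, P δ) ↔ ∃ δ₀ ∈ Ioc (0 : ℝ) 1, ∀ δ ∈ Ioo 0 δ₀, P δ := by
  refine ⟨fun h => ?_, fun ⟨δ₀, hδ₀, h⟩ => mem_of_superset (Ioo_mem_nhdsGT hδ₀.1) h⟩
  obtain ⟨δ₀, hδ₀, hsub⟩ := mem_nhdsGT_iff_exists_Ioo_subset.1 h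
  exact ⟨min δ₀ 1, ⟨lt_min hδ₀ one_pos, min_le_right _ _⟩,
    fun δ hδ => hsub ⟨hδ.1, hδ.2.trans_le (min_le_left _ _)⟩⟩

theorem tendsto_rpow_nhdsGT_zero {α : ℝ} (hα : 0 < α) :
    Tendsto (fun v : ℝ => v ^ α) (𝓝[>] 0) (𝓝[>] 0) := by
  refine tendsto_nhdsWithin_of_tendsto_nhds_of_eventually_within _ ?_ ?_
  · simpa [Real.zero_rpow hα.ne'] using
      (Real.continuousAt_rpow_const 0 α (Or.inr hα.le)).tendsto.mono_left nhdsWithin_le_nhds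
  · filter_upwards [self_mem_nhdsWithin] with v (hv : 0 < v) using Real.rpow_pos_of_pos hv α

theorem Admissible.eventually_pos_le {Φ : ℝ → ℝ} (hΦ : Admissible Φ) :
    ∀ᶠ δ in 𝓝[>] 0, 0 < Φ δ ∧ Φ δ ≤ δ := by
  obtain ⟨Y, hY, hpos, -⟩ := hΦ
  filter_upwards [Ioo_mem_nhdsGT hY] using hpos

theorem Admissible.eventually_lt_mul {Φ : ℝ → ℝ} (hΦ : Admissible Φ) {γ : ℝ} (hγ : 0 < γ) :
    ∀ᶠ δ in 𝓝[>] 0, Φ δ < γ * δ := by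
  obtain ⟨-, -, -, hlim, -⟩ := hΦ
  filter_upwards [hlim.eventually (gt_mem_nhds hγ), self_mem_nhdsWithin] with δ h (hδ : 0 < δ)
  rwa [div_lt_iff₀ hδ] at h

section

variable {X : Type*} [MetricSpace X] {c r₀ : ℝ}

theorem TotallyBounded.exists_cover_coverNum {G : Set X} (hG : TotallyBounded G) {δ : ℝ}
    (hδ : 0 < δ) :
    ∃ U : Fin (coverNum G δ) → Set X, G ⊆ ⋃ i, U i ∧ ∀ i, diam (U i) ≤ δ := by
  suffices h : {n : ℕ | ∃ U : Fin n → Set X, G ⊆ ⋃ i, U i ∧ ∀ i, diam (U i) ≤ δ}.Nonempty from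
    Nat.sInf_mem h
  obtain ⟨t, htf, hGt⟩ := totallyBounded_iff.mp hG (δ / 2) (by linarith)
  obtain ⟨n, f, rfl⟩ := htf.fin_embedding
  refine ⟨n, fun i => ball (f i) (δ / 2), fun x hx => ?_, fun i => ?_⟩
  · obtain ⟨y, ⟨i, rfl⟩, hxy⟩ := mem_iUnion₂.mp (hGt hx)
    exact mem_iUnion.2 ⟨i, hxy⟩
  · linarith [diam_ball (x := f i) (show 0 ≤ δ / 2 by linarith)]

def AssouadBoundWith (F : Set X) (C α : ℝ) : Prop :=
  ∀ x ∈ F, ∀ r R : ℝ, 0 < r → r < R → (coverNum (ball x R ∩ F) r : ℝ) ≤ C * (R / r) ^ α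

theorem AssouadBoundWith.exists_cover {F : Set X} {C α : ℝ} (hC : AssouadBoundWith F C α)
    (hF : TotallyBounded F) {x : X} (hx : x ∈ F) {r R : ℝ} (hr : 0 < r) (hrR : r < R) :
    ∃ (n : ℕ) (V : Fin n → Set X), ball x R ∩ F ⊆ ⋃ j, V j ∧ (∀ j, diam (V j) ≤ r) ∧
      (n : ℝ) ≤ C * (R / r) ^ α := by
  obtain ⟨V, hV, hVr⟩ := (hF.subset inter_subset_right).exists_cover_coverNum hr
  exact ⟨_, V, hV, hVr, hC x hx r R hr hrR⟩

theorem IsAssouadBound.mono {F : Set X} {α β : ℝ} (h : IsAssouadBound F α) (hαβ : α ≤ β) :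
    IsAssouadBound F β := by
  obtain ⟨hα, C, hC, hbound⟩ := h
  refine ⟨hα.trans hαβ, C, hC, fun x hx r R hr hrR => (hbound x hx r R hr hrR).trans ?_⟩
  have hRr : 1 ≤ R / r := by rw [le_div_iff₀ hr]; linarith
  gcongr

theorem isAssouadBound_of_assouadDim_lt {F : Set X} (hF : ∃ α, IsAssouadBound F α) {β : ℝ}
    (hβ : assouadDim F < β) : IsAssouadBound F β := by
  obtain ⟨α, hα, hαβ⟩ := exists_lt_of_csInf_lt hF hβ
  exact IsAssouadBound.mono hα hαβ.le

-- An unbounded set has `diam = 0`, so in an unbounded space every `coverNum` is at most `1`.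
theorem boundedSpace_of_assouadDim_pos {F : Set X} (hF : 0 < assouadDim F) : BoundedSpace X := by
  by_contra hX
  have hunb : ¬ Bornology.IsBounded (univ : Set X) := by rwa [Bornology.isBounded_univ]
  have h0 : IsAssouadBound F 0 := by
    refine ⟨le_rfl, 1, one_pos, fun x _ r R hr _ => ?_⟩
    have h1 : coverNum (ball x R ∩ F) r ≤ 1 :=
      Nat.sInf_le ⟨fun _ => univ, fun y _ => mem_iUnion.2 ⟨0, mem_univ y⟩,
        fun _ => by rw [diam_eq_zero_of_unbounded hunb]; exact hr.le⟩
    simpa using h1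
  exact hF.not_ge (csInf_le ⟨0, fun _ hα => hα.1⟩ h0)

def IsUpperPhiDimBound (Φ : ℝ → ℝ) (F : Set X) (s : ℝ) : Prop :=
  0 ≤ s ∧ ∀ ε : ℝ, 0 < ε → ∀ᶠ δ in 𝓝[>] 0, CoverSum Φ s ε δ F

theorem upperPhiDim_eq_sInf (Φ : ℝ → ℝ) (F : Set X) :
    upperPhiDim Φ F = sInf {s | IsUpperPhiDimBound Φ F s} := by
  simp only [IsUpperPhiDimBound, eventually_nhdsGT_zero_iff]
  rfl

theorem upperPhiDim_le {Φ : ℝ → ℝ} {F : Set X} {s : ℝ} (h : IsUpperPhiDimBound Φ F s) :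
    upperPhiDim Φ F ≤ s := by
  rw [upperPhiDim_eq_sInf]
  exact csInf_le ⟨0, fun _ ht => ht.1⟩ h

theorem exists_isUpperPhiDimBound_lt {Φ : ℝ → ℝ} {F : Set X} (hne : ∃ s, IsUpperPhiDimBound Φ F s)
    {t : ℝ} (ht : upperPhiDim Φ F < t) : ∃ s, IsUpperPhiDimBound Φ F s ∧ s < t := by
  rw [upperPhiDim_eq_sInf] at ht
  exact exists_lt_of_csInf_lt hne ht

def BandCover (s L u B : ℝ) (G : Set X) : Prop :=
  ∃ (n : ℕ) (W : Fin n → Set X), G ⊆ ⋃ j, W j ∧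
    (∀ j, L ≤ diam (W j) ∧ diam (W j) ≤ u) ∧ ∑ j, diam (W j) ^ s ≤ B

theorem coverSum_iff_bandCover {Φ : ℝ → ℝ} {s ε δ : ℝ} {F : Set X} :
    CoverSum Φ s ε δ F ↔ BandCover s (Φ δ) δ ε F :=
  Iff.rfl

theorem BandCover.mono {s L L' u u' B B' : ℝ} {G G' : Set X} (h : BandCover s L u B G)
    (hL : L' ≤ L) (hu : u ≤ u') (hB : B ≤ B') (hG : G' ⊆ G) : BandCover s L' u' B' G' := by
  obtain ⟨n, W, hGW, hW, hsum⟩ := h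
  exact ⟨n, W, hG.trans hGW, fun j => ⟨hL.trans (hW j).1, (hW j).2.trans hu⟩, hsum.trans hB⟩

theorem bandCover_empty {s L u B : ℝ} (hB : 0 ≤ B) : BandCover s L u B (∅ : Set X) :=
  ⟨0, fun _ => ∅, empty_subset _, fun j => j.elim0, by simpa using hB⟩

theorem BandCover.union {s L u B₁ B₂ : ℝ} {G₁ G₂ : Set X}
    (h₁ : BandCover s L u B₁ G₁) (h₂ : BandCover s L u B₂ G₂) :
    BandCover s L u (B₁ + B₂) (G₁ ∪ G₂) := by
  obtain ⟨m₁, W₁, hc₁, hd₁, hs₁⟩ := h₁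
  obtain ⟨m₂, W₂, hc₂, hd₂, hs₂⟩ := h₂
  refine ⟨m₁ + m₂, Fin.append W₁ W₂, ?_, fun j => Fin.addCases (fun j₁ => ?_) (fun j₂ => ?_) j, ?_⟩
  · rintro x (hx | hx)
    · obtain ⟨j, hj⟩ := mem_iUnion.1 (hc₁ hx)
      exact mem_iUnion.2 ⟨Fin.castAdd m₂ j, by rwa [Fin.append_left]⟩
    · obtain ⟨j, hj⟩ := mem_iUnion.1 (hc₂ hx)
      exact mem_iUnion.2 ⟨Fin.natAdd m₁ j, by rwa [Fin.append_right]⟩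
  · rw [Fin.sum_univ_add]
    simp only [Fin.append_left, Fin.append_right]
    exact add_le_add hs₁ hs₂
  · rw [Fin.append_left]; exact hd₁ j₁
  · rw [Fin.append_right]; exact hd₂ j₂

theorem BandCover.biUnion {ι : Type*} {s L u : ℝ} {G : ι → Set X} {B : ι → ℝ} (T : Finset ι)
    (h : ∀ i ∈ T, BandCover s L u (B i) (G i)) :
    BandCover s L u (∑ i ∈ T, B i) (⋃ i ∈ T, G i) := by
  classical
  induction T using Finset.induction with
  | empty => simpa using bandCover_empty (le_refl 0)
  | insert a T ha ih =>
    rw [Finset.sum_insert ha, Finset.set_biUnion_insert]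
    exact (h a (Finset.mem_insert_self a T)).union
      (ih fun i hi => h i (Finset.mem_insert_of_mem hi))

variable (X) in
def DiamPadding (c r₀ : ℝ) : Prop :=
  ∀ R ∈ Ioo 0 r₀, ∀ (V : Set X) (r : ℝ), diam V ≤ r →
    ∃ W, V ⊆ W ∧ c * R ≤ diam W ∧ diam W ≤ r + R

theorem UniformlyPerfect.exists_diamPadding [Nontrivial X] [BoundedSpace X]
    (hX : UniformlyPerfect X) : ∃ c > 0, ∃ r₀ > 0, DiamPadding X c r₀ := by
  obtain ⟨c, hc, -, hup⟩ := hX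
  obtain ⟨p, p', hpp'⟩ := exists_pair_ne X
  refine ⟨c, hc, dist p p', dist_pos.2 hpp', ?_⟩
  rintro R ⟨hR, hRp⟩ V r hV
  have hRX : ENNReal.ofReal R < ediam (univ : Set X) :=
    calc ENNReal.ofReal R < ENNReal.ofReal (dist p p') :=
          (ENNReal.ofReal_lt_ofReal_iff (dist_pos.2 hpp')).2 hRp
      _ = edist p p' := (edist_dist p p').symm
      _ ≤ ediam (univ : Set X) := edist_le_ediam_of_mem (mem_univ p) (mem_univ p')
  obtain ⟨z, hz⟩ : ∃ z, diam (insert z V) ≤ r := by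
    rcases V.eq_empty_or_nonempty with rfl | ⟨z, hz⟩
    · exact ⟨p, by simpa using hV⟩
    · exact ⟨z, by rwa [insert_eq_of_mem hz]⟩
  obtain ⟨y, hyR, hcy⟩ := hup z R hR hRX
  refine ⟨insert z V ∪ {y}, (subset_insert z V).trans subset_union_left, ?_, ?_⟩
  · exact hcy.trans (dist_le_diam_of_mem (Bornology.IsBounded.all _)
      (Or.inl (mem_insert z V)) (Or.inr rfl))
  · calc diam (insert z V ∪ {y}) ≤ diam (insert z V) + dist z y + diam ({y} : Set X) :=
          diam_union (mem_insert z V) rfl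
      _ ≤ r + R := by rw [diam_singleton]; linarith

theorem bandCover_of_cover {R r s : ℝ} {G : Set X} (hP : DiamPadding X c r₀)
    (hR : R ∈ Ioo 0 r₀) (hs : 0 ≤ s) {n : ℕ} {V : Fin n → Set X} (hGV : G ⊆ ⋃ j, V j)
    (hV : ∀ j, diam (V j) ≤ r) : BandCover s (c * R) (r + R) (n * (r + R) ^ s) G := by
  choose W hVW hlow hupp using fun j => hP R hR (V j) r (hV j)
  refine ⟨n, W, hGV.trans (iUnion_mono hVW), fun j => ⟨hlow j, hupp j⟩, ?_⟩
  calc ∑ j, diam (W j) ^ s ≤ ∑ _j : Fin n, (r + R) ^ s :=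
        Finset.sum_le_sum fun j _ => Real.rpow_le_rpow diam_nonneg (hupp j) hs
    _ = n * (r + R) ^ s := by simp

theorem isUpperPhiDimBound_add_one (hP : DiamPadding X c r₀) (hc : 0 < c) (hr₀ : 0 < r₀)
    {Φ : ℝ → ℝ} (hΦ : Admissible Φ) {F : Set X} (hF : TotallyBounded F) {α : ℝ}
    (hA : IsAssouadBound F α) : IsUpperPhiDimBound Φ F (α + 1) := by
  obtain ⟨hα, C, hC, hCF⟩ := hA
  refine ⟨by linarith, fun ε hε => ?_⟩
  rcases F.eq_empty_or_nonempty with rfl | ⟨x₀, hx₀⟩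
  · exact Eventually.of_forall fun δ => bandCover_empty hε.le
  set R₀ := diam F + 1
  have hR₀ : 1 ≤ R₀ := by linarith [diam_nonneg (s := F)]
  have hFball : ball x₀ R₀ ∩ F = F := inter_eq_right.2 fun y hy =>
    mem_ball.2 (by linarith [dist_le_diam_of_mem hF.isBounded hy hx₀])
  set K := C * (4 * R₀) ^ α
  have hK : 0 < K := by positivity
  filter_upwards [hΦ.eventually_pos_le, hΦ.eventually_lt_mul (half_pos hc),
    Ioo_mem_nhdsGT (lt_min (lt_min hr₀ one_pos) (div_pos hε hK))]
    with δ ⟨hΦδ, _⟩ hΦδc ⟨hδ, hδlt⟩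
  have hδr₀ : δ < r₀ := hδlt.trans_le ((min_le_left _ _).trans (min_le_left _ _))
  have hδ1 : δ < 1 := hδlt.trans_le ((min_le_left _ _).trans (min_le_right _ _))
  have hδε : K * δ ≤ ε := by
    have := hδlt.trans_le (min_le_right _ _)
    rw [lt_div_iff₀ hK] at this
    linarith
  have hR : Φ δ / c < δ / 2 := by rw [div_lt_iff₀ hc]; linarith
  obtain ⟨n, V, hFV, hV, hn⟩ :=
    AssouadBoundWith.exists_cover hCF hF hx₀ (r := δ / 4) (R := R₀) (by positivity) (by linarith)
  rw [hFball] at hFV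
  rw [coverSum_iff_bandCover]
  refine (bandCover_of_cover hP ⟨div_pos hΦδ hc, by linarith⟩ (by linarith) hFV hV).mono
    (by rw [mul_div_cancel₀ _ hc.ne']) (by linarith) ?_ subset_rfl
  calc (n : ℝ) * (δ / 4 + Φ δ / c) ^ (α + 1) ≤ C * (R₀ / (δ / 4)) ^ α * δ ^ (α + 1) := by
        gcongr
        linarith
    _ = K * δ := by
        rw [Real.rpow_add_one hδ.ne', div_div_eq_mul_div, mul_comm R₀ 4,
          Real.div_rpow (by positivity) hδ.le]
        field_simp
        rfl
    _ ≤ ε := hδε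

theorem bandCover_inter (hP : DiamPadding X c r₀) {F : Set X} (hF : TotallyBounded F)
    {C h : ℝ} (hC₀ : 0 ≤ C) (hC : AssouadBoundWith F C h) {R u q : ℝ} (hR : R ∈ Ioo 0 r₀)
    (hRu : R ≤ u / 4) (hq : 0 ≤ q) (U : Set X) :
    BandCover q (c * R) u
      (2 ^ q * (diam U ^ q + R ^ q) + C * 8 ^ h * diam U ^ h * u ^ (q - h)) (U ∩ F) := by
  have hR₀ := hR.1
  have hu : 0 < u := by linarith
  have hsmall : 0 ≤ 2 ^ q * (diam U ^ q + R ^ q) := by positivity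
  have hlarge : 0 ≤ C * 8 ^ h * diam U ^ h * u ^ (q - h) := by positivity
  by_cases hU : diam U ≤ u / 2
  · refine (bandCover_of_cover hP hR hq (V := fun _ : Fin 1 => U)
      (fun x hx => mem_iUnion.2 ⟨0, hx.1⟩) fun _ => le_rfl).mono le_rfl (by linarith) ?_ subset_rfl
    calc ((1 : ℕ) : ℝ) * (diam U + R) ^ q ≤ 2 ^ q * (diam U ^ q + R ^ q) := by
          simpa using rpow_add_le_two_rpow_mul diam_nonneg hR.1.le hq
      _ ≤ _ := le_add_of_nonneg_right hlarge
  rcases (U ∩ F).eq_empty_or_nonempty with hUF | ⟨x, hxU, hxF⟩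
  · rw [hUF]; exact bandCover_empty (by positivity)
  push Not at hU
  have hUb : Bornology.IsBounded U := by
    by_contra hUb; linarith [diam_eq_zero_of_unbounded hUb]
  have hsub : U ∩ F ⊆ ball x (2 * diam U) ∩ F := fun y hy =>
    ⟨mem_ball.2 (by linarith [dist_le_diam_of_mem hUb hy.1 hxU]), hy.2⟩
  obtain ⟨n, V, hV, hVd, hn⟩ :=
    hC.exists_cover hF hxF (r := u / 4) (R := 2 * diam U) (by positivity) (by linarith)
  refine (bandCover_of_cover hP hR hq (hsub.trans hV) hVd).mono le_rfl (by linarith) ?_ subset_rfl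
  calc (n : ℝ) * (u / 4 + R) ^ q ≤ C * (2 * diam U / (u / 4)) ^ h * u ^ q := by
        gcongr
        linarith
    _ = C * 8 ^ h * diam U ^ h * u ^ (q - h) := by
        rw [show 2 * diam U / (u / 4) = 8 * diam U / u by field_simp; ring,
          Real.div_rpow (by positivity) hu.le, Real.mul_rpow (by norm_num) diam_nonneg,
          Real.rpow_sub hu]
        field_simp
    _ ≤ _ := le_add_of_nonneg_left hsmall

theorem coverSum_rpow_of_coverSum (hP : DiamPadding X c r₀) (hc : 0 < c) {F : Set X}
    (hF : TotallyBounded F) {C h : ℝ} (hC₀ : 0 ≤ C) (hC : AssouadBoundWith F C h)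
    {Φ Φ₁ : ℝ → ℝ} {s q α v ε : ℝ} (hs : 0 ≤ s) (hsq : s ≤ q) (hsh : s ≤ h)
    (hexp : 0 ≤ α * (q - h) + h - s) (hv : v ≤ 1) (hΦv : 0 < Φ v)
    (hR : Φ₁ (v ^ α) / c ∈ Ioo 0 r₀) (hRu : Φ₁ (v ^ α) / c ≤ v ^ α / 4)
    (hΦ₁ : Φ₁ (v ^ α) ^ q ≤ Φ v ^ s) (hcov : CoverSum Φ s ε v F) :
    CoverSum Φ₁ q ((2 ^ q * (1 + (c ^ q)⁻¹) + C * 8 ^ h) * ε) (v ^ α) F := by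
  obtain ⟨n, U, hFU, hU, hsum⟩ := hcov
  have hq : 0 ≤ q := hs.trans hsq
  have hΦ₁pos : 0 < Φ₁ (v ^ α) := (div_pos_iff_of_pos_right hc).1 hR.1
  have hpiece : ∀ i ∈ Finset.univ, BandCover q (Φ₁ (v ^ α)) (v ^ α)
      ((2 ^ q * (1 + (c ^ q)⁻¹) + C * 8 ^ h) * diam (U i) ^ s) (U i ∩ F) := by
    intro i _
    set d := diam (U i)
    have hd : 0 < d := hΦv.trans_le (hU i).1
    have hdq : d ^ q ≤ d ^ s := Real.rpow_le_rpow_of_exponent_ge hd ((hU i).2.trans hv) hsq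
    have hRq : (Φ₁ (v ^ α) / c) ^ q ≤ (c ^ q)⁻¹ * d ^ s := by
      rw [Real.div_rpow hΦ₁pos.le hc.le, div_eq_inv_mul]
      gcongr
      exact hΦ₁.trans (Real.rpow_le_rpow hΦv.le (hU i).1 hs)
    have hdh := rpow_mul_rpow_rpow_le hd (hU i).2 hv hsh hexp
    refine (bandCover_inter hP hF hC₀ hC hR hRu hq (U i)).mono
      (by rw [mul_div_cancel₀ _ hc.ne']) le_rfl ?_ subset_rfl
    calc 2 ^ q * (d ^ q + (Φ₁ (v ^ α) / c) ^ q) + C * 8 ^ h * d ^ h * (v ^ α) ^ (q - h)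
        = 2 ^ q * (d ^ q + (Φ₁ (v ^ α) / c) ^ q) + C * 8 ^ h * (d ^ h * (v ^ α) ^ (q - h)) := by
          ring
      _ ≤ 2 ^ q * (d ^ s + (c ^ q)⁻¹ * d ^ s) + C * 8 ^ h * d ^ s := by gcongr
      _ = _ := by ring
  rw [coverSum_iff_bandCover]
  refine (BandCover.biUnion Finset.univ hpiece).mono le_rfl le_rfl ?_ fun x hx => ?_
  · rw [← Finset.mul_sum]
    gcongr
  · obtain ⟨i, hi⟩ := mem_iUnion.1 (hFU hx)
    exact mem_biUnion (Finset.mem_coe.2 (Finset.mem_univ i)) ⟨hi, hx⟩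

theorem isUpperPhiDimBound_of_comparison (hP : DiamPadding X c r₀) (hc : 0 < c) (hr₀ : 0 < r₀)
    {F : Set X} (hF : TotallyBounded F) {C h : ℝ} (hC₀ : 0 ≤ C) (hC : AssouadBoundWith F C h)
    {Φ Φ₁ : ℝ → ℝ} (hΦ : Admissible Φ) (hΦ₁ : Admissible Φ₁) {α b s q : ℝ} (hα : 0 < α)
    (hcomp : ∀ᶠ v in 𝓝[>] 0, Φ₁ (v ^ α) ≤ Φ v ^ b) (hs : IsUpperPhiDimBound Φ F s)
    (hsq : s ≤ q) (hsh : s ≤ h) (hsb : s ≤ b * q) (hexp : 0 ≤ α * (q - h) + h - s) :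
    IsUpperPhiDimBound Φ₁ F q := by
  have hq : 0 ≤ q := hs.1.trans hsq
  refine ⟨hq, fun ε hε => ?_⟩
  set κ := 2 ^ q * (1 + (c ^ q)⁻¹) + C * 8 ^ h
  have hκ : 0 < κ := by positivity
  have hpow := tendsto_rpow_nhdsGT_zero hα
  have hscale : ∀ᶠ v in 𝓝[>] 0, CoverSum Φ₁ q ε (v ^ α) F := by
    filter_upwards [hs.2 (ε / κ) (div_pos hε hκ), hΦ.eventually_pos_le, hcomp,
      Ioo_mem_nhdsGT one_pos, hpow.eventually hΦ₁.eventually_pos_le,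
      hpow.eventually (hΦ₁.eventually_lt_mul (div_pos hc four_pos)),
      hpow.eventually (Ioo_mem_nhdsGT hr₀)]
      with v hcov ⟨hΦv, hΦvv⟩ hcompv ⟨_, hv1⟩ ⟨hΦ₁u, _⟩ hΦ₁lt ⟨_, hur₀⟩
    have hRu : Φ₁ (v ^ α) / c ≤ v ^ α / 4 := by
      rw [div_le_iff₀ hc]; linarith
    have hΦ₁q : Φ₁ (v ^ α) ^ q ≤ Φ v ^ s :=
      calc Φ₁ (v ^ α) ^ q ≤ (Φ v ^ b) ^ q := by gcongr
        _ = Φ v ^ (b * q) := (Real.rpow_mul hΦv.le b q).symm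
        _ ≤ Φ v ^ s := Real.rpow_le_rpow_of_exponent_ge hΦv (hΦvv.trans hv1.le) hsb
    have := coverSum_rpow_of_coverSum hP hc hF hC₀ hC hs.1 hsq hsh hexp hv1.le hΦv
      ⟨div_pos hΦ₁u hc, by linarith⟩ hRu hΦ₁q hcov
    rwa [mul_div_cancel₀ _ hκ.ne'] at this
  filter_upwards [(tendsto_rpow_nhdsGT_zero (inv_pos.2 hα)).eventually hscale,
    self_mem_nhdsWithin] with u hu (hu₀ : 0 < u)
  rwa [← Real.rpow_mul hu₀.le, inv_mul_cancel₀ hα.ne', Real.rpow_one] at hu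

end

theorem stmt4_general {X : Type*} [MetricSpace X] [Nontrivial X] (hX : UniformlyPerfect X)
    (Φ Φ₁ : ℝ → ℝ) (hΦ : Admissible Φ) (hΦ₁ : Admissible Φ₁)
    (F : Set X) (hTB : TotallyBounded F)
    (hAfin : ∃ α, IsAssouadBound F α) (hApos : 0 < assouadDim F)
    (hzero : upperPhiDim Φ F = 0)
    (η : ℝ) (hη : η ∈ Set.Ioo 0 (assouadDim F))
    (hcomp : ∃ b Δ : ℝ, 0 < b ∧ 0 < Δ ∧ ∀ δ ∈ Set.Ioo (0:ℝ) Δ,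
      Φ₁ (δ ^ (assouadDim F / (assouadDim F - η))) ≤ (Φ δ) ^ b) :
    upperPhiDim Φ₁ F ≤ η := by
  have : BoundedSpace X := boundedSpace_of_assouadDim_pos hApos
  obtain ⟨c, hc, r₀, hr₀, hP⟩ := hX.exists_diamPadding
  obtain ⟨b, Δ, hb, hΔ, hcomp⟩ := hcomp
  obtain ⟨hη₀, hηA⟩ := hη
  set A := assouadDim F
  -- `hzero` carries information only once some exponent works, since `sInf ∅ = 0`.
  have hΦbound : ∃ s, IsUpperPhiDimBound Φ F s :=
    let ⟨α, hα⟩ := hAfin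
    ⟨α + 1, isUpperPhiDimBound_add_one hP hc hr₀ hΦ hTB hα⟩
  refine le_of_forall_gt_imp_ge_of_dense fun q hq => ?_
  obtain ⟨h, hAh, t, ht, hexps⟩ := exists_exponent_gap hη₀ hηA hq hb
  obtain ⟨-, C, hC, hCF⟩ := isAssouadBound_of_assouadDim_lt hAfin hAh
  obtain ⟨s, hs, hst⟩ := exists_isUpperPhiDimBound_lt hΦbound (hzero ▸ ht)
  obtain ⟨hsη, hsb, hexp⟩ := hexps s hst.le
  exact upperPhiDim_le (isUpperPhiDimBound_of_comparison hP hc hr₀ hTB hC.le hCF hΦ hΦ₁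
    (div_pos hApos (sub_pos.2 hηA)) (by filter_upwards [Ioo_mem_nhdsGT hΔ] using hcomp) hs
    (by linarith) (by linarith) hsb hexp)

theorem stmt4 {X : Type*} [MetricSpace X] [Nontrivial X] (hX : UniformlyPerfect X)
    (Φ Φ₁ : ℝ → ℝ) (hΦ : Admissible Φ) (hΦ₁ : Admissible Φ₁)
    (F : Set X) (hne : F.Nonempty) (hTB : TotallyBounded F)
    (hAfin : ∃ α, IsAssouadBound F α) (hApos : 0 < assouadDim F)
    (hzero : upperPhiDim Φ F = 0)
    (η : ℝ) (hη : η ∈ Set.Ioo 0 (assouadDim F))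
    (hcomp : ∃ b Δ : ℝ, 0 < b ∧ 0 < Δ ∧ ∀ δ ∈ Set.Ioo (0:ℝ) Δ,
      Φ₁ (δ ^ (assouadDim F / (assouadDim F - η))) ≤ (Φ δ) ^ b) :
    upperPhiDim Φ₁ F ≤ η :=
  stmt4_general hX Φ Φ₁ hΦ hΦ₁ F hTB hAfin hApos hzero η hη hcomp
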